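/- Let (x_n,y_n)_{n∈ℕ} be a sequence of pairs of vertices of V such that every pair {x,y} of distinct vertices occurs as {x_n,y_n} for infinitely many n. Define 𝒞⁰ to be the partition of V into singletons and 𝒞^{n+1} = M_{x_n,y_n}(𝒞ⁿ). Then each 𝒞^{n+1} is coarser than 𝒞ⁿ, and the limiting partition (x ∼ y iff x ∼ y in 𝒞ⁿ for some n) equals the cumulatively merged partition 𝒞(G,r,α); in particular the limit does not depend on the choice of the sequence (x_n,y_n). -/

import Mathlib

open scoped ENNReal NNReal
open MeasureTheory

namespace CMPPaper

variable {V : Type*}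

/-- Graph distance between two subsets of vertices, valued in `ℝ≥0∞`
(`⊤` when one of the sets is empty). -/
noncomputable def setDist (G : SimpleGraph V) (A B : Set V) : ℝ≥0∞ :=
  ⨅ (x : A) (y : B), (G.dist x.1 y.1 : ℝ≥0∞)

/-- Total weight `r(A) = Σ_{x ∈ A} r(x) ∈ [0,∞]` of a set of vertices. -/
noncomputable def wt (r : V → ℝ≥0) (A : Set V) : ℝ≥0∞ :=
  ∑' x : A, (r x.1 : ℝ≥0∞)

/-- A partition (encoded as a setoid) of the vertex set is `(r,α)`-admissible if any two
distinct clusters `C ≠ C'` satisfy `d(C,C') > min(r(C), r(C'))^α`. -/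
def Admissible (G : SimpleGraph V) (r : V → ℝ≥0) (α : ℝ) (s : Setoid V) : Prop :=
  ∀ C ∈ s.classes, ∀ C' ∈ s.classes, C ≠ C' →
    (min (wt r C) (wt r C')) ^ α < setDist G C C'

/-- The cumulatively merged partition: the finest `(r,α)`-admissible partition, i.e. the
intersection (infimum as setoids) of all `(r,α)`-admissible partitions. -/
noncomputable def CMP (G : SimpleGraph V) (r : V → ℝ≥0) (α : ℝ) : Setoid V :=
  sInf {s : Setoid V | Admissible G r α s}

/-- The cluster of the CMP containing `x`. -/
def cluster (G : SimpleGraph V) (r : V → ℝ≥0) (α : ℝ) (x : V) : Set V :=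
  {y | (CMP G r α) x y}

/-- The ball `B(A, l) = {z : d(z,A) ≤ l}` around a set of vertices. -/
def ballSet (G : SimpleGraph V) (A : Set V) (l : ℝ≥0∞) : Set V :=
  {z | ∃ a ∈ A, (G.dist z a : ℝ≥0∞) ≤ l}

/-- A subset `H` of the vertices is stable if every cluster `C` of the CMP of the induced
subgraph on `H` (with the restricted weights) satisfies `B(C, r(C)^α) ⊆ H`. -/
def IsStable (G : SimpleGraph V) (r : V → ℝ≥0) (α : ℝ) (H : Set V) : Prop :=
  ∀ C ∈ (CMP (G.induce H) (fun x : H => r x) α).classes,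
    ballSet G (Subtype.val '' C) ((wt (fun x : H => r x) C) ^ α) ⊆ H

/-- The stabiliser of `W`: the smallest stable set containing `W`, i.e. the intersection of
all stable sets containing `W`. -/
def stabiliser (G : SimpleGraph V) (r : V → ℝ≥0) (α : ℝ) (W : Set V) : Set V :=
  ⋂₀ {H : Set V | IsStable G r α H ∧ W ⊆ H}

open Classical in
/-- The merging operator `M_{x,y}`: if the clusters of `x` and `y` are distinct and
`d(x,y) ≤ min(r(𝒞_x), r(𝒞_y))^α`, merge them (take the smallest coarsening of `s`
relating `x` and `y`); otherwise leave the partition unchanged. -/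
noncomputable def mergeOp (G : SimpleGraph V) (r : V → ℝ≥0) (α : ℝ) (x y : V)
    (s : Setoid V) : Setoid V :=
  if ¬ s x y ∧ (G.dist x y : ℝ≥0∞) ≤ (min (wt r {u | s x u}) (wt r {u | s y u})) ^ α then
    sInf {t : Setoid V | s ≤ t ∧ t x y}
  else s

/-- The relation `C ↦ C'` (`C'` descends from `C`) on clusters of the CMP. -/
def Descends (G : SimpleGraph V) (r : V → ℝ≥0) (α : ℝ) (C C' : Set V) : Prop :=
  C ∈ (CMP G r α).classes ∧ C' ∈ (CMP G r α).classes ∧ C ≠ C' ∧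
    setDist G C C' ≤ (wt r C) ^ α

/-- Integer part of an extended nonnegative real, valued in `ℕ∞`. -/
noncomputable def efloor (x : ℝ≥0∞) : ℕ∞ :=
  if x = ⊤ then ⊤ else (⌊x.toReal⌋₊ : ℕ∞)

/-- The bound `max(w log₂ w / 2, 0)` (for `α = 1`), resp. `w^α/(2^α-2)` (for `α ≠ 1`),
on the diameter of a cluster of total weight `w`. -/
noncomputable def diamBound (α : ℝ) (w : ℝ≥0∞) : ℝ≥0∞ :=
  if α = 1 then
    (if w = ⊤ then ⊤ else ENNReal.ofReal (max (w.toReal * Real.logb 2 w.toReal / 2) 0))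
  else w ^ α / ((2 : ℝ≥0∞) ^ α - 2)

/-- The relation `C →η C'` on clusters of the CMP:  `d(C,C') ≤ η·r(C)^α`. -/
def EtaDesc (G : SimpleGraph V) (r : V → ℝ≥0) (α η : ℝ) (C C' : Set V) : Prop :=
  C ∈ (CMP G r α).classes ∧ C' ∈ (CMP G r α).classes ∧ C ≠ C' ∧
    setDist G C C' ≤ ENNReal.ofReal η * (wt r C) ^ α

/-- The `η`-stabiliser of a vertex `x`: the union of `𝒞_x` together with all clusters
reachable from `𝒞_x` by a finite oriented path for the relation `→η`. -/
def etaStab (G : SimpleGraph V) (r : V → ℝ≥0) (α η : ℝ) (x : V) : Set V :=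
  ⋃₀ {C' | Relation.ReflTransGen (EtaDesc G r α η) (cluster G r α x) C'}

/-- The path graph on `ℕ`: `m` and `m+1` are adjacent. -/
def pathGraphN : SimpleGraph ℕ := SimpleGraph.fromRel (fun m n => n = m + 1)

/-- The two-sided path graph on `ℤ`: `k` and `k+1` are adjacent. -/
def pathGraphZ : SimpleGraph ℤ := SimpleGraph.fromRel (fun a b => b = a + 1)

/-- The hypercubic lattice `ℤ^d`: `x` and `y` are adjacent iff `‖x-y‖₁ = 1`. -/
def latticeGraph (d : ℕ) : SimpleGraph (Fin d → ℤ) :=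
  SimpleGraph.fromRel (fun x y => (∑ i, |x i - y i|) = 1)

/-- The CMP of the weighted graph `(G, r)` with expansion exponent `α` has an
infinite cluster. -/
def HasInfiniteCluster (G : SimpleGraph V) (r : V → ℝ≥0) (α : ℝ) : Prop :=
  ∃ C ∈ (CMP G r α).classes, C.Infinite

/-- `w` is an i.i.d. family of Bernoulli(`p`) weights indexed by `V`, under the
probability measure `μ`. -/
def IsBernoulliField {Ω : Type*} [MeasurableSpace Ω] (μ : Measure Ω)
    (p : ℝ) (w : Ω → V → ℝ≥0) : Prop :=
  (∀ x : V, Measurable fun ω => w ω x) ∧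
  (∀ ω x, w ω x = 0 ∨ w ω x = 1) ∧
  (∀ x : V, μ {ω | w ω x = 1} = ENNReal.ofReal p) ∧
  ProbabilityTheory.iIndepFun (fun x ω => w ω x) μ

/-- `w` is an i.i.d. family of weights indexed by `V`, each with law `ν`, under the
probability measure `μ`. -/
def IsIIDField {Ω : Type*} [MeasurableSpace Ω] (μ : Measure Ω)
    (ν : Measure ℝ≥0) (w : Ω → V → ℝ≥0) : Prop :=
  (∀ x : V, Measurable fun ω => w ω x) ∧
  (∀ x : V, μ.map (fun ω => w ω x) = ν) ∧
  ProbabilityTheory.iIndepFun (fun x ω => w ω x) μ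

/-
Merging never goes beyond an admissible partition: by induction every `𝒞ⁿ` is finer than each
of them, hence than the CMP. Conversely the limit `⨆ₙ 𝒞ⁿ` is admissible. A partition is
admissible exactly when it relates every pair `x, y` with `d(x,y) ≤ min(r(𝒞_x), r(𝒞_y))^α`,
and such a pair is examined at arbitrarily late times, so it suffices that the clusters of `x`
and `y` in some finite `𝒞ⁿ` are already heavy enough. They are: on a connected graph two
clusters merge only if both weigh at least one, so the cluster of a vertex either stabilises,
and is then its limit cluster, or it changes infinitely often and its weight tends to `∞`.
-/

section Weights

variable (r : V → ℝ≥0)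

lemma wt_mono {A B : Set V} (h : A ⊆ B) : wt r A ≤ wt r B :=
  ENNReal.tsum_mono_subtype (fun x => (r x : ℝ≥0∞)) h

lemma wt_union {A B : Set V} (h : Disjoint A B) : wt r (A ∪ B) = wt r A + wt r B :=
  ENNReal.summable.tsum_union_disjoint (f := fun x => (r x : ℝ≥0∞)) h ENNReal.summable

variable {r} {S : ℕ → Set V}

lemma eq_or_wt_add_one_le_of_le
    (hjump : ∀ n, S (n + 1) = S n ∨ wt r (S n) + 1 ≤ wt r (S (n + 1))) {m n : ℕ} (hmn : m ≤ n) :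
    S n = S m ∨ wt r (S m) + 1 ≤ wt r (S n) := by
  induction n, hmn using Nat.le_induction with
  | base => exact Or.inl rfl
  | succ n hmn ih =>
    rcases hjump n with hn | hn
    · rwa [hn]
    · refine Or.inr (le_trans ?_ hn)
      rcases ih with ih | ih
      · rw [ih]
      · exact ih.trans le_self_add

lemma exists_le_wt_of_le_wt_iUnion (hS : Monotone S)
    (hjump : ∀ n, S (n + 1) = S n ∨ wt r (S n) + 1 ≤ wt r (S (n + 1)))
    {k : ℝ≥0∞} (hk : k ≠ ⊤) (h : k ≤ wt r (⋃ n, S n)) : ∃ n, k ≤ wt r (S n) := by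
  by_cases hstab : ∃ N, ∀ m, N ≤ m → S m = S N
  · obtain ⟨N, hN⟩ := hstab
    have hUnion : (⋃ n, S n) ⊆ S N := Set.iUnion_subset fun n =>
      (hS (le_max_left n N)).trans (hN _ (le_max_right n N)).le
    exact ⟨N, h.trans (wt_mono r hUnion)⟩
  · push Not at hstab
    have hunbounded : ∀ j : ℕ, ∃ n, (j : ℝ≥0∞) ≤ wt r (S n) := by
      intro j
      induction j with
      | zero => exact ⟨0, by simp⟩
      | succ j ih =>
        obtain ⟨n, hn⟩ := ih
        obtain ⟨m, hnm, hm⟩ := hstab n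
        have hgrow := (eq_or_wt_add_one_le_of_le hjump hnm).resolve_left hm
        exact ⟨m, by push_cast; exact (add_le_add hn le_rfl).trans hgrow⟩
    obtain ⟨j, hj⟩ := ENNReal.exists_nat_gt hk
    obtain ⟨n, hn⟩ := hunbounded j
    exact ⟨n, hj.le.trans hn⟩

end Weights

lemma setDist_le_dist (G : SimpleGraph V) {A B : Set V} {x y : V} (hx : x ∈ A) (hy : y ∈ B) :
    setDist G A B ≤ G.dist x y :=
  iInf₂_le_of_le ⟨x, hx⟩ ⟨y, hy⟩ le_rfl

lemma exists_dist_eq_setDist (G : SimpleGraph V) {A B : Set V} (hA : A.Nonempty)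
    (hB : B.Nonempty) : ∃ x ∈ A, ∃ y ∈ B, (G.dist x y : ℝ≥0∞) = setDist G A B := by
  obtain ⟨a, ha⟩ := hA
  obtain ⟨b, hb⟩ := hB
  obtain ⟨x, hx, y, hy, hmin⟩ := Nat.sInf_mem (s := {n | ∃ x ∈ A, ∃ y ∈ B, G.dist x y = n})
    ⟨_, a, ha, b, hb, rfl⟩
  refine ⟨x, hx, y, hy, le_antisymm (le_iInf₂ fun p q => ?_) (setDist_le_dist G hx hy)⟩
  exact_mod_cast hmin.trans_le (Nat.sInf_le ⟨p, p.2, q, q.2, rfl⟩)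

section Partitions

def mergeRel (s : Setoid V) (p q : V) : Setoid V where
  r z u := s z u ∨ (s z p ∧ s q u) ∨ (s z q ∧ s p u)
  iseqv := by
    have hsymm : ∀ {a b}, s a b → s b a := s.symm'
    have htrans : ∀ {a b c}, s a b → s b c → s a c := s.trans'
    refine ⟨fun z => Or.inl (s.refl' z), fun h => ?_, fun h h' => ?_⟩ <;> grind

variable {G : SimpleGraph V} {r : V → ℝ≥0} {α : ℝ} {s : Setoid V} {x y z : V}

lemma setOf_rel_comm : {u | s u x} = {u | s x u} :=
  Set.ext fun _ => s.comm'

lemma setOf_rel_eq_of_rel (h : s x y) : {u | s x u} = {u | s y u} :=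
  Set.ext fun _ => ⟨s.trans' (s.symm' h), s.trans' h⟩

lemma admissible_iff : Admissible G r α s ↔ ∀ x y,
    (G.dist x y : ℝ≥0∞) ≤ (min (wt r {u | s x u}) (wt r {u | s y u})) ^ α → s x y := by
  constructor
  · intro hadm x y hd
    by_contra hxy
    have hne : {u | s u x} ≠ {u | s u y} := fun h => hxy ((Set.ext_iff.mp h x).mp (s.refl' x))
    have hlt := hadm _ (s.mem_classes x) _ (s.mem_classes y) hne
    rw [setOf_rel_comm, setOf_rel_comm] at hlt
    exact (hlt.trans_le ((setDist_le_dist G (s.refl' x) (s.refl' y)).trans hd)).false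
  · rintro h _ ⟨x, rfl⟩ _ ⟨y, rfl⟩ hne
    rw [setOf_rel_comm, setOf_rel_comm] at hne ⊢
    by_contra! hle
    obtain ⟨x', hx', y', hy', hd⟩ :=
      exists_dist_eq_setDist G (A := {u | s x u}) (B := {u | s y u}) ⟨x, s.refl' x⟩ ⟨y, s.refl' y⟩
    rw [setOf_rel_eq_of_rel hx', setOf_rel_eq_of_rel hy'] at hne hle hd
    exact hne (setOf_rel_eq_of_rel (h x' y' (hd.trans_le hle)))

lemma sInf_eq_mergeRel (p q : V) :
    sInf {t : Setoid V | s ≤ t ∧ t p q} = mergeRel s p q := by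
  refine le_antisymm (sInf_le ⟨fun _ _ h => Or.inl h, Or.inr (Or.inl ⟨s.refl' p, s.refl' q⟩)⟩) ?_
  refine le_sInf fun t ⟨hst, hpq⟩ z u h => ?_
  rcases h with h | ⟨hzp, hqu⟩ | ⟨hzq, hpu⟩
  · exact hst h
  · exact t.trans' (hst hzp) (t.trans' hpq (hst hqu))
  · exact t.trans' (hst hzq) (t.trans' (t.symm' hpq) (hst hpu))

lemma mergeRel_class_of_rel {p q : V} (h : s z p ∨ s z q) :
    {u | mergeRel s p q z u} = {u | s p u} ∪ {u | s q u} := by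
  have hsymm : ∀ {a b}, s a b → s b a := s.symm'
  have htrans : ∀ {a b c}, s a b → s b c → s a c := s.trans'
  ext u
  change (s z u ∨ (s z p ∧ s q u) ∨ (s z q ∧ s p u)) ↔ (s p u ∨ s q u)
  grind

lemma mergeRel_class_of_not_rel {p q : V} (hp : ¬ s z p) (hq : ¬ s z q) :
    {u | mergeRel s p q z u} = {u | s z u} := by
  ext u
  change (s z u ∨ (s z p ∧ s q u) ∨ (s z q ∧ s p u)) ↔ s z u
  tauto

end Partitions

section Merging

lemma le_mergeOp (G : SimpleGraph V) (r : V → ℝ≥0) (α : ℝ) (x y : V) (s : Setoid V) :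
    s ≤ mergeOp G r α x y s := by
  unfold mergeOp
  split_ifs
  exacts [le_sInf fun _ ht => ht.1, le_rfl]

variable {G : SimpleGraph V} {r : V → ℝ≥0} {α : ℝ} {s : Setoid V} {x y : V}

lemma mergeOp_eq_mergeRel
    (h : ¬ s x y ∧ (G.dist x y : ℝ≥0∞) ≤ (min (wt r {u | s x u}) (wt r {u | s y u})) ^ α) :
    mergeOp G r α x y s = mergeRel s x y := by
  rw [mergeOp, if_pos h, sInf_eq_mergeRel]

lemma mergeOp_rel_of_dist_le
    (h : (G.dist x y : ℝ≥0∞) ≤ (min (wt r {u | s x u}) (wt r {u | s y u})) ^ α) :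
    mergeOp G r α x y s x y := by
  by_cases hxy : s x y
  · exact le_mergeOp G r α x y s hxy
  · rw [mergeOp_eq_mergeRel ⟨hxy, h⟩]
    exact Or.inr (Or.inl ⟨s.refl' x, s.refl' y⟩)

lemma mergeOp_le_of_admissible (hα : 0 ≤ α) {t : Setoid V} (ht : Admissible G r α t)
    (hst : s ≤ t) : mergeOp G r α x y s ≤ t := by
  unfold mergeOp
  split_ifs with hmerge
  · refine sInf_le ⟨hst, admissible_iff.mp ht x y (hmerge.2.trans ?_)⟩
    exact ENNReal.rpow_le_rpow (min_le_min (wt_mono r fun _ hu => hst hu)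
      (wt_mono r fun _ hu => hst hu)) hα
  · exact hst

lemma eq_or_wt_add_one_le_mergeOp (hconn : G.Connected) (hα : 0 < α) (z : V) :
    {u | mergeOp G r α x y s z u} = {u | s z u} ∨
      wt r {u | s z u} + 1 ≤ wt r {u | mergeOp G r α x y s z u} := by
  by_cases hmerge : ¬ s x y ∧ (G.dist x y : ℝ≥0∞) ≤ (min (wt r {u | s x u}) (wt r {u | s y u})) ^ α
  swap
  · exact Or.inl (by rw [mergeOp, if_neg hmerge])
  rw [mergeOp_eq_mergeRel hmerge]
  obtain ⟨hxy, hd⟩ := hmerge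
  have hone : 1 ≤ min (wt r {u | s x u}) (wt r {u | s y u}) := by
    have hdist : (1 : ℝ≥0∞) ≤ G.dist x y := by
      exact_mod_cast hconn.pos_dist_of_ne fun h => hxy (by subst h; exact s.refl' x)
    rw [← ENNReal.rpow_le_rpow_iff hα, ENNReal.one_rpow]
    exact hdist.trans hd
  have hdisj : Disjoint {u | s x u} {u | s y u} :=
    Set.disjoint_left.mpr fun _ hxu hyu => hxy (s.trans' hxu (s.symm' hyu))
  by_cases hz : s z x ∨ s z y
  · right
    rw [mergeRel_class_of_rel hz, wt_union r hdisj]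
    rcases hz with hz | hz <;> rw [setOf_rel_eq_of_rel hz]
    · exact add_le_add le_rfl (hone.trans (min_le_right _ _))
    · rw [add_comm (wt r _) 1]
      exact add_le_add (hone.trans (min_le_left _ _)) le_rfl
  · push Not at hz
    exact Or.inl (mergeRel_class_of_not_rel hz.1 hz.2)

end Merging

lemma iSup_rel_iff_of_directed {ι : Type*} [Nonempty ι] {s : ι → Setoid V}
    (hs : Directed (· ≤ ·) s) {x y : V} : (⨆ i, s i) x y ↔ ∃ i, s i x y := by
  refine ⟨fun h => ?_, fun ⟨i, h⟩ => le_iSup s i h⟩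
  rw [iSup, Setoid.sSup_eq_eqvGen] at h
  induction h with
  | rel x y h =>
    obtain ⟨_, ⟨i, rfl⟩, h⟩ := h
    exact ⟨i, h⟩
  | refl x => exact ⟨Classical.arbitrary ι, Setoid.refl' _ x⟩
  | symm x y _ ih =>
    obtain ⟨i, h⟩ := ih
    exact ⟨i, Setoid.symm' _ h⟩
  | trans x y z _ _ ihxy ihyz =>
    obtain ⟨i, hi⟩ := ihxy
    obtain ⟨j, hj⟩ := ihyz
    obtain ⟨k, hik, hjk⟩ := hs i j
    exact ⟨k, Setoid.trans' _ (hik hi) (hjk hj)⟩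

section MergingProcedure

variable {G : SimpleGraph V} {r : V → ℝ≥0} {α : ℝ} {xy : ℕ → V × V} {C : ℕ → Setoid V}

lemma monotone_of_merging (hCsucc : ∀ n, C (n + 1) = mergeOp G r α (xy n).1 (xy n).2 (C n)) :
    Monotone C :=
  monotone_nat_of_le_succ fun n => hCsucc n ▸ le_mergeOp ..

lemma le_of_merging_of_admissible (hα : 0 ≤ α) (hC0 : C 0 = ⊥)
    (hCsucc : ∀ n, C (n + 1) = mergeOp G r α (xy n).1 (xy n).2 (C n)) {t : Setoid V}
    (ht : Admissible G r α t) (n : ℕ) : C n ≤ t := by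
  induction n with
  | zero => exact hC0 ▸ bot_le
  | succ n ih => exact hCsucc n ▸ mergeOp_le_of_admissible hα ht ih

lemma admissible_iSup_of_merging (hconn : G.Connected) (hα : 0 < α)
    (hxy : ∀ x y : V, x ≠ y → {n : ℕ | xy n = (x, y) ∨ xy n = (y, x)}.Infinite)
    (hCsucc : ∀ n, C (n + 1) = mergeOp G r α (xy n).1 (xy n).2 (C n)) :
    Admissible G r α (⨆ n, C n) := by
  have hmono := monotone_of_merging hCsucc
  have hrel (x y : V) : (⨆ n, C n) x y ↔ ∃ n, C n x y :=
    iSup_rel_iff_of_directed hmono.directed_le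
  have heventually (x : V) {k : ℝ≥0∞} (hk : k ≠ ⊤)
      (hle : k ≤ wt r {u | (⨆ n, C n) x u} ^ α) :
      ∃ N, ∀ m, N ≤ m → k ≤ wt r {u | C m x u} ^ α := by
    have hclass : {u | (⨆ n, C n) x u} = ⋃ n, {u | C n x u} := by
      ext u
      simp [hrel]
    rw [hclass, ← ENNReal.rpow_inv_le_iff hα] at hle
    obtain ⟨N, hN⟩ := exists_le_wt_of_le_wt_iUnion (S := fun n => {u | C n x u})
      (fun _ _ h _ hu => hmono h hu)
      (fun n => hCsucc n ▸ eq_or_wt_add_one_le_mergeOp hconn hα x)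
      (ENNReal.rpow_ne_top_of_nonneg (inv_nonneg.mpr hα.le) hk) hle
    exact ⟨N, fun m hm => (ENNReal.rpow_inv_le_iff hα).mp
      (hN.trans (wt_mono r fun _ hu => hmono hm hu))⟩
  refine admissible_iff.mpr fun x y hd => ?_
  obtain rfl | hne := eq_or_ne x y
  · exact Setoid.refl' _ x
  rw [(ENNReal.monotone_rpow_of_nonneg hα.le).map_min] at hd
  obtain ⟨N₁, hN₁⟩ := heventually x (ENNReal.natCast_ne_top _) (hd.trans (min_le_left _ _))
  obtain ⟨N₂, hN₂⟩ := heventually y (ENNReal.natCast_ne_top _) (hd.trans (min_le_right _ _))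
  obtain ⟨m, hm, hNm⟩ := (hxy x y hne).exists_gt (max N₁ N₂)
  have hdm : (G.dist x y : ℝ≥0∞) ≤ (min (wt r {u | C m x u}) (wt r {u | C m y u})) ^ α := by
    rw [(ENNReal.monotone_rpow_of_nonneg hα.le).map_min]
    exact le_min (hN₁ m (le_of_max_le_left hNm.le)) (hN₂ m (le_of_max_le_right hNm.le))
  refine (hrel x y).mpr ⟨m + 1, ?_⟩
  rcases hm with hm | hm <;> rw [hCsucc m, hm]
  · exact mergeOp_rel_of_dist_le hdm
  · refine Setoid.symm' _ (mergeOp_rel_of_dist_le ?_)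
    rwa [G.dist_comm, min_comm]

end MergingProcedure

theorem merging_procedure_converges_to_CMP_general
    {V : Type*} (G : SimpleGraph V) (hconn : G.Connected)
    (r : V → ℝ≥0) (α : ℝ) (hα : 1 ≤ α)
    (xy : ℕ → V × V)
    (hxy : ∀ x y : V, x ≠ y → {n : ℕ | xy n = (x, y) ∨ xy n = (y, x)}.Infinite)
    (C : ℕ → Setoid V) (hC0 : C 0 = ⊥)
    (hCsucc : ∀ n, C (n + 1) = mergeOp G r α (xy n).1 (xy n).2 (C n)) :
    (∀ n, C n ≤ C (n + 1)) ∧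
    (∀ u v : V, (CMP G r α) u v ↔ ∃ n, (C n) u v) := by
  have hα₀ : 0 < α := zero_lt_one.trans_le hα
  have hmono := monotone_of_merging hCsucc
  have hCMP : CMP G r α = ⨆ n, C n :=
    le_antisymm (sInf_le (admissible_iSup_of_merging hconn hα₀ hxy hCsucc))
      (iSup_le fun n => le_sInf fun _ ht => le_of_merging_of_admissible hα₀.le hC0 hCsucc ht n)
  refine ⟨fun n => hmono n.le_succ, fun u v => ?_⟩
  rw [hCMP]
  exact iSup_rel_iff_of_directed hmono.directed_le

/-- Starting from the finest partition and repeatedly applying the merging operators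
`M_{x_n,y_n}`, where every pair of distinct vertices appears infinitely often in the
sequence, yields an increasing sequence of partitions whose limit is the CMP
(in particular it does not depend on the chosen sequence). -/
theorem merging_procedure_converges_to_CMP
    {V : Type*} (G : SimpleGraph V) (hconn : G.Connected)
    (hlf : ∀ v : V, (G.neighborSet v).Finite)
    (r : V → ℝ≥0) (α : ℝ) (hα : 1 ≤ α)
    (xy : ℕ → V × V)
    (hxy : ∀ x y : V, x ≠ y → {n : ℕ | xy n = (x, y) ∨ xy n = (y, x)}.Infinite)
    (C : ℕ → Setoid V) (hC0 : C 0 = ⊥)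
    (hCsucc : ∀ n, C (n + 1) = mergeOp G r α (xy n).1 (xy n).2 (C n)) :
    (∀ n, C n ≤ C (n + 1)) ∧
    (∀ u v : V, (CMP G r α) u v ↔ ∃ n, (C n) u v) :=
  merging_procedure_converges_to_CMP_general G hconn r α hα xy hxy C hC0 hCsucc

end CMPPaper
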